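/- arXiv:1705.05190 — 2 statements merged into one kernel-verified Lean document; each statement's English description precedes it below -/
import Mathlib

section
/- With cyl₁ and Vol as defined (cyl₁(ν) = 2·∑_{ι⊂ν} ∏_d C(ν_d,ι_d) · C(|ν|+4,|ι|+2) and Vol(ν) = 2π²·∏_d f(d)^{ν_d}), the ratio P₁(ν) := cyl₁(ν)/Vol(ν) is unchanged when zero entries are added to ν: if ν' is ν with ν₀ replaced by 0, then P₁(ν) = P₁(ν'). -/
/-!
The coordinate `ν 0` is invisible to `absPart`, so in `cyl1 ν` the sum over `ι 0 ≤ ν 0` splits off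
as `∑ k, (ν 0).choose k = 2 ^ ν 0`, while in `Vol ν` it contributes `f 0 ^ ν 0 = 2 ^ ν 0`.
The two factors cancel in the ratio.
-/

open Real

def absPart (ν : ℕ →₀ ℕ) : ℕ := ν.sum fun d m => d * m

noncomputable def cyl1 (ν : ℕ →₀ ℕ) : ℕ :=
  2 * ∑ ι ∈ Finset.Iic ν,
      (∏ d ∈ ν.support, Nat.choose (ν d) (ι d)) *
        Nat.choose (absPart ν + 4) (absPart ι + 2)

noncomputable def f (d : ℕ) : ℝ :=
  ((Nat.doubleFactorial d : ℝ) / (Nat.doubleFactorial (d + 1) : ℝ)) * π ^ d *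
    (if Odd d then π else 2)

noncomputable def Vol (ν : ℕ →₀ ℕ) : ℝ :=
  2 * π ^ 2 * (ν.prod fun d m => f d ^ m)

noncomputable def P1 (ν : ℕ →₀ ℕ) : ℝ := (cyl1 ν : ℝ) / Vol ν

lemma Finsupp.sum_Iic_eq_sum_range_sum_Iic_erase {ι M : Type*} [DecidableEq ι] [AddCommMonoid M]
    (ν : ι →₀ ℕ) (a : ι) (F : ℕ → (ι →₀ ℕ) → M) :
    ∑ κ ∈ Finset.Iic ν, F (κ a) (κ.erase a) =
      ∑ k ∈ Finset.range (ν a + 1), ∑ κ ∈ Finset.Iic (ν.erase a), F k κ := by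
  rw [← Finset.sum_product']
  refine Finset.sum_nbij' (fun κ => (κ a, κ.erase a)) (fun p => Finsupp.single a p.1 + p.2)
    ?_ ?_ ?_ ?_ (fun _ _ => rfl)
  · intro κ hκ
    simp only [Finset.mem_Iic, Finset.mem_product, Finset.mem_range, Finsupp.le_def] at hκ ⊢
    refine ⟨Nat.lt_succ_of_le (hκ a), fun d => ?_⟩
    rcases eq_or_ne d a with rfl | hd
    · simp
    · simpa [Finsupp.erase_ne hd] using hκ d
  · rintro ⟨k, κ⟩ hp
    simp only [Finset.mem_Iic, Finset.mem_product, Finset.mem_range, Finsupp.le_def] at hp ⊢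
    intro d
    rcases eq_or_ne d a with rfl | hd
    · have hκd : κ d = 0 := by simpa using hp.2 d
      simpa [hκd] using Nat.le_of_lt_succ hp.1
    · simpa [Finsupp.erase_ne hd, Finsupp.single_apply, Ne.symm hd] using hp.2 d
  · intro κ _
    exact Finsupp.single_add_erase a κ
  · rintro ⟨k, κ⟩ hp
    simp only [Finset.mem_Iic, Finset.mem_product, Finsupp.le_def] at hp
    have hκa : κ a = 0 := by simpa using hp.2 a
    simp [hκa, Finsupp.erase_add, Finsupp.erase_of_notMem_support]

lemma Finsupp.prod_choose_eq_choose_mul_prod_choose_erase {ι : Type*} [DecidableEq ι]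
    {ν : ι →₀ ℕ} {a : ι} (ha : a ∈ ν.support) (κ : ι →₀ ℕ) :
    ∏ d ∈ ν.support, (ν d).choose (κ d) =
      (ν a).choose (κ a) * ∏ d ∈ (ν.erase a).support, ((ν.erase a) d).choose ((κ.erase a) d) := by
  rw [← Finset.mul_prod_erase _ _ ha, Finsupp.support_erase]
  refine congrArg _ (Finset.prod_congr rfl fun d hd => ?_)
  rw [Finsupp.erase_ne (Finset.ne_of_mem_erase hd), Finsupp.erase_ne (Finset.ne_of_mem_erase hd)]

lemma absPart_erase_zero (ν : ℕ →₀ ℕ) : absPart (ν.erase 0) = absPart ν := by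
  conv_rhs => rw [← Finsupp.single_add_erase 0 ν]
  rw [absPart, absPart, Finsupp.sum_add_index' (fun _ => mul_zero _) (fun _ => mul_add _),
    Finsupp.sum_single_index (mul_zero _), zero_mul, zero_add]

lemma f_zero : f 0 = 2 := by
  simp [f]

lemma cyl1_eq_two_pow_mul_cyl1_erase_zero {ν : ℕ →₀ ℕ} (h0 : 0 ∈ ν.support) :
    cyl1 ν = 2 ^ ν 0 * cyl1 (ν.erase 0) := by
  set ν' := ν.erase 0
  let term (κ : ℕ →₀ ℕ) : ℕ :=
    (∏ d ∈ ν'.support, (ν' d).choose (κ d)) * (absPart ν' + 4).choose (absPart κ + 2)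
  have hterm (κ : ℕ →₀ ℕ) :
      (∏ d ∈ ν.support, (ν d).choose (κ d)) * (absPart ν + 4).choose (absPart κ + 2) =
        (ν 0).choose (κ 0) * term (κ.erase 0) := by
    rw [Finsupp.prod_choose_eq_choose_mul_prod_choose_erase h0, ← absPart_erase_zero ν,
      ← absPart_erase_zero κ, mul_assoc]
  have hsplit := Finsupp.sum_Iic_eq_sum_range_sum_Iic_erase ν 0 fun k κ => (ν 0).choose k * term κ
  beta_reduce at hsplit
  rw [cyl1, cyl1, Finset.sum_congr rfl fun κ _ => hterm κ, hsplit]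
  simp_rw [← Finset.mul_sum, ← Finset.sum_mul, Nat.sum_range_choose]
  ring

lemma Vol_eq_pow_mul_Vol_erase (ν : ℕ →₀ ℕ) (a : ℕ) :
    Vol ν = f a ^ ν a * Vol (ν.erase a) := by
  rw [Vol, Vol, ← Finsupp.mul_prod_erase' ν a _ fun _ => pow_zero _]
  ring

theorem P1_erase_zero (ν : ℕ →₀ ℕ) : P1 ν = P1 (ν.erase 0) := by
  by_cases h0 : 0 ∈ ν.support
  · rw [P1, P1, cyl1_eq_two_pow_mul_cyl1_erase_zero h0, Vol_eq_pow_mul_Vol_erase ν 0, f_zero,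
      Nat.cast_mul, Nat.cast_pow, Nat.cast_ofNat, mul_div_mul_left _ _ (by positivity)]
  · rw [Finsupp.erase_of_notMem_support h0]
end

section
/- For all k ≥ 0, cyl₁ of the stratum with an added marked point doubles: with cyl₁(ν) = 2·∑_{ι⊂ν} ∏_d C(ν_d,ι_d)·C(|ν|+4,|ι|+2), one has cyl₁([0¹ 1^k]) = 2·cyl₁([1^k]), i.e., adding a single part equal to 0 to the partition multiplies cyl₁ by 2. -/
/-! Marked points sit at coordinate `0`, so they do not change `absPart`, and the binomial
weight at that coordinate factors out of `cyl1`: summing `m.choose a` over `a ≤ m` gives `2 ^ m`. -/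

open Finset

lemma absPart_add (f g : ℕ →₀ ℕ) : absPart (f + g) = absPart f + absPart g :=
  Finsupp.sum_add_index' (fun _ => mul_zero _) fun _ _ _ => mul_add _ _ _

@[simp]
lemma absPart_single (d n : ℕ) : absPart (Finsupp.single d n) = d * n :=
  Finsupp.sum_single_index (mul_zero d)

namespace Finsupp

variable {α : Type*} [DecidableEq α]

lemma sum_Iic_single_add {M : Type*} [AddCommMonoid M] {i : α} {m : ℕ} {ν : α →₀ ℕ}
    (hν : ν i = 0) (f : (α →₀ ℕ) → M) :
    ∑ ι ∈ Iic (single i m + ν), f ι = ∑ a ∈ Iic m, ∑ κ ∈ Iic ν, f (single i a + κ) := by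
  rw [← sum_product']
  refine sum_nbij' (fun ι => (ι i, ι.erase i)) (fun p => single i p.1 + p.2) ?_ ?_ ?_ ?_ ?_
  · intro ι hι
    simp only [mem_Iic, mem_product, Finsupp.le_def] at hι ⊢
    refine ⟨by simpa [hν] using hι i, fun j => ?_⟩
    rcases eq_or_ne j i with rfl | hj
    · simp
    · simpa [erase_ne hj, single_eq_of_ne hj] using hι j
  · intro p hp
    simp only [mem_Iic, mem_product] at hp ⊢
    exact add_le_add (single_le_single.2 hp.1) hp.2
  · intro ι _
    exact single_add_erase i ι
  · rintro ⟨a, κ⟩ hp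
    simp only [mem_Iic, mem_product] at hp
    have hκ : κ i = 0 := Nat.eq_zero_of_le_zero ((hp.2 i).trans_eq hν)
    ext1
    · simp [hκ]
    · simp [erase_add, erase_of_notMem_support, hκ]
  · intro ι _
    rw [single_add_erase]

lemma prod_choose_single_add {i : α} {m a : ℕ} {ν : α →₀ ℕ} (hν : ν i = 0) (ha : a ≤ m)
    {κ : α →₀ ℕ} (hκ : κ i = 0) :
    ∏ d ∈ (single i m + ν).support, ((single i m + ν) d).choose ((single i a + κ) d) =
      m.choose a * ∏ d ∈ ν.support, (ν d).choose (κ d) := by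
  have hi : i ∉ ν.support := notMem_support_iff.2 hν
  have hne : ∀ d ∈ ν.support, d ≠ i := fun d hd h => hi (h ▸ hd)
  rw [prod_subset (s₂ := insert i ν.support), prod_insert hi]
  · congr 1
    · simp [hν, hκ]
    · refine Finset.prod_congr rfl fun d hd => ?_
      simp [single_eq_of_ne (hne d hd)]
  · exact support_add.trans (union_subset_union_left support_single_subset)
  · intro d hd hd'
    rw [notMem_support_iff] at hd'
    rcases mem_insert.1 hd with rfl | hd
    · simp_all
    · exact absurd hd' (by simpa [single_eq_of_ne (hne d hd)] using hd)

end Finsupp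

theorem cyl1_single_zero_add (m : ℕ) {ν : ℕ →₀ ℕ} (hν : ν 0 = 0) :
    cyl1 (Finsupp.single 0 m + ν) = 2 ^ m * cyl1 ν := by
  unfold cyl1
  calc _ = 2 * ∑ a ∈ Iic m, ∑ κ ∈ Iic ν, m.choose a *
        ((∏ d ∈ ν.support, (ν d).choose (κ d)) * (absPart ν + 4).choose (absPart κ + 2)) := by
        rw [Finsupp.sum_Iic_single_add hν]
        refine congrArg (2 * ·) (sum_congr rfl fun a ha => sum_congr rfl fun κ hκ => ?_)
        have hκ0 : κ 0 = 0 := Nat.eq_zero_of_le_zero ((mem_Iic.1 hκ 0).trans_eq hν)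
        rw [Finsupp.prod_choose_single_add hν (mem_Iic.1 ha) hκ0]
        simp [absPart_add, mul_assoc]
    _ = _ := by
        rw [← sum_mul_sum, ← Nat.range_succ_eq_Iic, Nat.sum_range_choose]
        ring

theorem cyl1_marked_point_doubles (k : ℕ) :
    cyl1 (Finsupp.single 0 1 + Finsupp.single 1 k) = 2 * cyl1 (Finsupp.single 1 k) := by
  simpa using cyl1_single_zero_add 1 (ν := Finsupp.single 1 k) (by simp)
end
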